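/- Let 𝒵 be a finite set with weights P(z) > 0 summing to 1. For functions ĥ with residual r_ĥ(z) = E[Y − ĥ(X) | z], define the game payoff L(ĥ, f) = ∑_z P(z)·(2·r_ĥ(z)·f(z) − f(z)²). Suppose (ĥ, f̂) is an ε-approximate Nash equilibrium in classes 𝓗, 𝓕 such that for every ĥ ∈ 𝓗 the function z ↦ r_ĥ(z) lies in 𝓕, and min_{h ∈ 𝓗} L(h, f̂) ≤ 0. Then ∑_z P(z)·r_ĥ(z)² ≤ ε, i.e., PRMSE(ĥ) ≤ √ε. -/
import Mathlib

/-- Payoff of the IVR game over a finite instrument space. -/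
noncomputable def gamePayoff {𝒵 : Type*} [Fintype 𝒵] (P : 𝒵 → ℝ)
    (r f : 𝒵 → ℝ) : ℝ :=
  ∑ z, P z * (2 * r z * f z - f z ^ 2)

theorem stmt_5 {𝒵 : Type*} [Fintype 𝒵] (P : 𝒵 → ℝ)
    (hP : ∀ z, 0 < P z) (hPsum : ∑ z, P z = 1)
    {H : Type*} (R : H → 𝒵 → ℝ)  -- residual z ↦ E[Y − hhat(X) | z] of each hypothesis
    (𝓗 : Set H) (𝓕 : Set (𝒵 → ℝ))
    (hclosed : ∀ h ∈ 𝓗, R h ∈ 𝓕)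
    (ε : ℝ) (hhat : H) (fhat : 𝒵 → ℝ) (hhhat : hhat ∈ 𝓗) (hfhat : fhat ∈ 𝓕)
    -- ε-approximate Nash equilibrium:
    (hNash₁ : ∀ f ∈ 𝓕, gamePayoff P (R hhat) f - ε / 2 ≤ gamePayoff P (R hhat) fhat)
    (hNash₂ : ∀ h ∈ 𝓗, gamePayoff P (R hhat) fhat ≤ gamePayoff P (R h) fhat + ε / 2)
    -- min over 𝓗 of the payoff against fhat is nonpositive:
    (hmin : ∃ h ∈ 𝓗, gamePayoff P (R h) fhat ≤ 0) :
    ∑ z, P z * (R hhat z) ^ 2 ≤ ε := by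
  obtain ⟨h, hh, hle⟩ := hmin
  have h1 := hNash₁ (R hhat) (hclosed hhat hhhat)
  have h2 := hNash₂ h hh
  have key : gamePayoff P (R hhat) (R hhat) = ∑ z, P z * (R hhat z) ^ 2 := by
    unfold gamePayoff
    apply Finset.sum_congr rfl
    intro z _
    ring
  rw [key] at h1
  linarith
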